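/- Let A be a complex (possibly non-unital) Banach algebra possessing a bounded approximate identity: a net (e_i) in A with sup_i ‖e_i‖ < ∞ such that ‖a e_i − a‖ → 0 and ‖e_i a − a‖ → 0 for every a ∈ A. Let 𝓜(A) denote the multiplier (double centralizer) algebra of A, i.e. the Banach algebra of pairs (L, R) of bounded linear maps A → A satisfying R(x)·y = x·L(y) for all x, y ∈ A, with product (L₁, R₁)(L₂, R₂) = (L₁∘L₂, R₂∘R₁) and norm max(‖L‖, ‖R‖). For a ∈ A let ι(a) = (L_a, R_a) ∈ 𝓜(A), where L_a(x) = a x and R_a(x) = x a. Let φ be a character on A and ψ a character on 𝓜(A) satisfying ψ(ι(a)) = φ(a) for all a ∈ A. Then A is φ-amenable if and only if 𝓜(A) is ψ-amenable. -/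
import Mathlib


open Filter

/-- A (possibly non-unital) complex Banach algebra `A` with a character `φ` is
`φ`-amenable if there is `m ∈ A**` with `m(φ) = 1` and `a·m = φ(a)·m` for all `a ∈ A`,
where `(a·m)(f) = m(f·a)` and `(f·a)(b) = f(ab)`. -/
def PhiAmenable (A : Type*) [NonUnitalNormedRing A] [NormedSpace ℂ A] [IsScalarTower ℂ A A]
    [SMulCommClass ℂ A A] (φ : A →L[ℂ] ℂ) : Prop :=
  ∃ m : (A →L[ℂ] ℂ) →L[ℂ] ℂ, m φ = 1 ∧
    ∀ (a : A) (f : A →L[ℂ] ℂ), m (f.comp (ContinuousLinearMap.mul ℂ A a)) = φ a * m f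

/-- The canonical map `ι : A → 𝓜(A)` into the multiplier (double centralizer) algebra,
`ι(a) = (L_a, R_a)` with `L_a(x) = a * x` and `R_a(x) = x * a`. -/
noncomputable def iotaMultiplier (A : Type*) [NonUnitalNormedRing A] [NormedSpace ℂ A]
    [IsScalarTower ℂ A A] [SMulCommClass ℂ A A] (a : A) : DoubleCentralizer ℂ A :=
  ⟨(ContinuousLinearMap.mul ℂ A a, (ContinuousLinearMap.mul ℂ A).flip a),
    fun x y => mul_assoc x a y⟩

/-- Let `A` be a (possibly non-unital) complex Banach algebra with a bounded approximate
identity `(e_i)`, let `φ` be a character on `A` and `ψ` a character on the multiplier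
algebra `𝓜(A)` with `ψ(ι(a)) = φ(a)` for all `a ∈ A`.  Then `A` is `φ`-amenable if and
only if `𝓜(A)` is `ψ`-amenable. -/
theorem phiAmenable_iff_multiplier_phiAmenable (A : Type*) [NonUnitalNormedRing A]
    [NormedSpace ℂ A] [IsScalarTower ℂ A A] [SMulCommClass ℂ A A] [CompleteSpace A]
    (I : Type*) [Nonempty I] [Preorder I] [IsDirected I (· ≤ ·)]
    (e : I → A) (C : ℝ) (he_bdd : ∀ i, ‖e i‖ ≤ C)
    (he_left : ∀ a : A, Tendsto (fun i => ‖e i * a - a‖) atTop (nhds 0))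
    (he_right : ∀ a : A, Tendsto (fun i => ‖a * e i - a‖) atTop (nhds 0))
    (φ : A →L[ℂ] ℂ) (hφmul : ∀ a b : A, φ (a * b) = φ a * φ b) (hφne : φ ≠ 0)
    (ψ : DoubleCentralizer ℂ A →L[ℂ] ℂ)
    (hψmul : ∀ T S : DoubleCentralizer ℂ A, ψ (T * S) = ψ T * ψ S) (hψne : ψ ≠ 0)
    (hψφ : ∀ a : A, ψ (iotaMultiplier A a) = φ a) :
    PhiAmenable A φ ↔ PhiAmenable (DoubleCentralizer ℂ A) ψ := by
  classical
  -- the approximate identity converges in the usual sense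
  have hlim : ∀ a : A, Tendsto (fun i => e i * a) atTop (nhds a) := fun a =>
    tendsto_iff_norm_sub_tendsto_zero.2 (he_left a)
  -- Key fact 1: every multiplier's left part is a right `A`-module map
  have K1 : ∀ (T : DoubleCentralizer ℂ A) (a b : A), T.fst (a * b) = T.fst a * b := by
    intro T a b
    have hz : ∀ z : A, z * T.fst (a * b) = z * (T.fst a * b) := by
      intro z
      rw [← T.central, ← mul_assoc, T.central, mul_assoc]
    refine tendsto_nhds_unique (hlim (T.fst (a * b))) ?_
    simpa only [hz] using hlim (T.fst a * b)
  -- Key fact 2: `T * ι a = ι (T.fst a)`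
  have K2 : ∀ (T : DoubleCentralizer ℂ A) (a : A),
      T * iotaMultiplier A a = iotaMultiplier A (T.fst a) := by
    intro T a
    refine DoubleCentralizer.ext ℂ A _ _ (Prod.ext ?_ ?_)
    · exact ContinuousLinearMap.ext fun x => K1 T a x
    · exact ContinuousLinearMap.ext fun x => T.central x a
  -- an element `a₀` with `φ a₀ = 1`
  obtain ⟨c, hc⟩ : ∃ c : A, φ c ≠ 0 := by
    by_contra h
    push_neg at h
    exact hφne (ContinuousLinearMap.ext fun x => by simpa using h x)
  set a₀ : A := (φ c)⁻¹ • c with ha₀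
  have hφa₀ : φ a₀ = 1 := by
    simp only [ha₀, map_smul, smul_eq_mul]
    exact inv_mul_cancel₀ hc
  -- `ψ T = φ (T.fst a₀)`
  have hψT : ∀ T : DoubleCentralizer ℂ A, φ (T.fst a₀) = ψ T := by
    intro T
    rw [← hψφ, ← K2, hψmul, hψφ, hφa₀, mul_one]
  -- `ι` as a continuous linear map
  let ιL : A →ₗ[ℂ] DoubleCentralizer ℂ A :=
    { toFun := iotaMultiplier A
      map_add' := fun a b => DoubleCentralizer.ext ℂ A _ _ <| Prod.ext
        (ContinuousLinearMap.ext fun x => add_mul a b x)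
        (ContinuousLinearMap.ext fun x => mul_add x a b)
      map_smul' := fun r a => DoubleCentralizer.ext ℂ A _ _ <| Prod.ext
        (ContinuousLinearMap.ext fun x => smul_mul_assoc r a x)
        (ContinuousLinearMap.ext fun x => mul_smul_comm r x a) }
  let ιCLM : A →L[ℂ] DoubleCentralizer ℂ A := ιL.mkContinuous 1 fun a => by
    rw [one_mul]
    change ‖iotaMultiplier A a‖ ≤ ‖a‖
    rw [DoubleCentralizer.norm_def, Prod.norm_def]
    refine max_le (ContinuousLinearMap.opNorm_mul_apply_le ℂ A a) ?_
    exact ContinuousLinearMap.opNorm_le_bound _ (norm_nonneg a) fun x =>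
      (norm_mul_le x a).trans (le_of_eq (mul_comm _ _))
  have hιCLM : ∀ a : A, ιCLM a = iotaMultiplier A a := fun a => rfl
  -- `T ↦ T.fst` as a continuous linear map
  let fstL : DoubleCentralizer ℂ A →ₗ[ℂ] (A →L[ℂ] A) :=
    { toFun := fun T => T.fst
      map_add' := fun T S => rfl
      map_smul' := fun r T => rfl }
  let fstCLM : DoubleCentralizer ℂ A →L[ℂ] (A →L[ℂ] A) := fstL.mkContinuous 1 fun T => by
    rw [one_mul, DoubleCentralizer.norm_def, Prod.norm_def]
    exact le_max_left _ _
  constructor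
  · rintro ⟨m, hm1, hminv⟩
    -- transfer invariance along `fst`
    have hL : ∀ (f : A →L[ℂ] ℂ) (T : DoubleCentralizer ℂ A),
        m (f.comp T.fst) = ψ T * m f := by
      intro f T
      have h1 : (f.comp T.fst).comp (ContinuousLinearMap.mul ℂ A a₀)
          = f.comp (ContinuousLinearMap.mul ℂ A (T.fst a₀)) :=
        ContinuousLinearMap.ext fun b => congrArg f (K1 T a₀ b)
      have h2 := hminv a₀ (f.comp T.fst)
      rw [h1, hminv (T.fst a₀) f, hφa₀, one_mul] at h2
      rw [← h2, hψT]
    refine ⟨m.comp ((ContinuousLinearMap.compL ℂ A (DoubleCentralizer ℂ A) ℂ).flip ιCLM),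
      ?_, ?_⟩
    · have : ψ.comp ιCLM = φ := ContinuousLinearMap.ext fun a => hψφ a
      simpa [this] using hm1
    · intro T F
      have hF : (F.comp (ContinuousLinearMap.mul ℂ (DoubleCentralizer ℂ A) T)).comp ιCLM
          = (F.comp ιCLM).comp T.fst :=
        ContinuousLinearMap.ext fun a => congrArg F (K2 T a)
      simp only [ContinuousLinearMap.comp_apply, ContinuousLinearMap.flip_apply,
        ContinuousLinearMap.compL_apply]
      rw [hF, hL]
  · rintro ⟨M, hM1, hMinv⟩
    -- evaluation `T ↦ T.fst a₀` as a continuous linear map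
    set ev : DoubleCentralizer ℂ A →L[ℂ] A :=
      (ContinuousLinearMap.apply ℂ A a₀).comp fstCLM with hev
    have hevT : ∀ T : DoubleCentralizer ℂ A, ev T = T.fst a₀ := fun T => rfl
    refine ⟨M.comp ((ContinuousLinearMap.compL ℂ (DoubleCentralizer ℂ A) A ℂ).flip ev),
      ?_, ?_⟩
    · have : φ.comp ev = ψ := ContinuousLinearMap.ext fun T => hψT T
      simpa [this] using hM1
    · intro a f
      have hf : (f.comp (ContinuousLinearMap.mul ℂ A a)).comp ev
          = (f.comp ev).comp
              (ContinuousLinearMap.mul ℂ (DoubleCentralizer ℂ A) (iotaMultiplier A a)) := by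
        refine ContinuousLinearMap.ext fun T => ?_
        show f (a * T.fst a₀) = f ((iotaMultiplier A a * T).fst a₀)
        rfl
      simp only [ContinuousLinearMap.comp_apply, ContinuousLinearMap.flip_apply,
        ContinuousLinearMap.compL_apply]
      rw [hf, hMinv (iotaMultiplier A a) (f.comp ev), hψφ]
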